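/- arXiv:1712.08661 — 4 statements merged into one kernel-verified Lean document; each statement's English description precedes it below -/
import Mathlib

section
/- Let T be a causal team with G(T) finite and acyclic, X and Y sets of variables in dom(T), x ∈ Ran(X) and y ∈ Ran(Y), such that whenever a variable belongs to both X and Y, the values assigned to it by x and by y coincide. Let Y' = Y \ X and let y' be the restriction of y to Y'. Then (T_{X=x})_{Y=y} = (T_{X=x})_{Y'=y'}. -/
open scoped Classical

/-- A (pre-)causal team over variables `V` and values `A`: a team of assignments,
a set of endogenous variables, a directed graph (the edge relation), ranges for the
variables, and partial structural functions.  The function `fn Y` is given on full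
assignments (it is required, via `IsCausal`, to depend only on the parents of `Y`);
`fn Y s = none` means that the invariant function for `Y` is undefined on the
parent-values of `s`. -/
structure PreCausalTeam (V A : Type) where
  team : Set (V → A)
  endo : Set V
  edge : V → V → Prop
  ran : V → Set A
  fn : V → (V → A) → Option A

namespace PreCausalTeam

variable {V A : Type}

/-- The defining conditions of a causal team: values lie in the ranges, the structural
functions exist only for endogenous variables, depend only on the parents and take values
in the ranges, the team satisfies the functional dependence of each endogenous variable
on its parents (condition (b)), and the team complies with the structural functions
(condition (c)). -/
def IsCausal (T : PreCausalTeam V A) : Prop :=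
  (∀ s ∈ T.team, ∀ X, s X ∈ T.ran X) ∧
  (∀ Y, Y ∉ T.endo → ∀ s, T.fn Y s = none) ∧
  (∀ Y, ∀ s s' : V → A, (∀ X, T.edge X Y → s X = s' X) → T.fn Y s = T.fn Y s') ∧
  (∀ Y s a, T.fn Y s = some a → a ∈ T.ran Y) ∧
  (∀ s ∈ T.team, ∀ s' ∈ T.team, ∀ Y ∈ T.endo,
    (∀ X, T.edge X Y → s X = s' X) → s Y = s' Y) ∧
  (∀ s ∈ T.team, ∀ Y a, T.fn Y s = some a → s Y = a)

/-- A causal team is parametric if the structural function of each endogenous variable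
is defined on every combination of values (from the ranges) for its parents. -/
def Parametric (T : PreCausalTeam V A) : Prop :=
  ∀ Y ∈ T.endo, ∀ s : V → A, (∀ X, T.edge X Y → s X ∈ T.ran X) → (T.fn Y s).isSome

/-- A causal team is recursive if its graph is acyclic (no directed cycles). -/
def Recursive (T : PreCausalTeam V A) : Prop :=
  ∀ v, ¬ Relation.TransGen T.edge v v

/-- The causal (sub)team obtained by replacing the team component (graph, ranges and
functions are kept). -/
def withTeam (T : PreCausalTeam V A) (S : Set (V → A)) : PreCausalTeam V A :=
  { T with team := S }

/-- The effect of the intervention `do(X = x)` on a single assignment `s` of a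
recursive causal team: the variables in `X` are set to the prescribed values, and the
descendants of `X` are updated (in order of evaluation distance) using the structural
functions; variables whose structural function is undefined at the new parent values
keep their old value.  (Defined by well-founded recursion along the acyclic graph.) -/
noncomputable def doAssign (T : PreCausalTeam V A) (X : Set V) (x : V → A)
    (s : V → A) : V → A :=
  if h : WellFounded T.edge then
    WellFounded.fix (C := fun _ => A) h fun W ih =>
      if W ∈ X then x W
      else (T.fn W fun P => if hp : T.edge P W then ih P hp else s P).getD (s W)
  else s

/-- The intervened causal team `T_{X=x}`: all arrows into `X` are deleted, the variables
of `X` become exogenous (their structural functions are removed), and every assignment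
of the team is updated by the intervention algorithm. -/
noncomputable def doTeam (T : PreCausalTeam V A) (X : Set V) (x : V → A) :
    PreCausalTeam V A where
  team := T.doAssign X x '' T.team
  endo := T.endo \ X
  edge := fun a b => T.edge a b ∧ b ∉ X
  ran := T.ran
  fn := fun W s => if W ∈ X then none else T.fn W s

end PreCausalTeam

namespace PreCausalTeam

variable {V A : Type}

lemma doAssign_eq (T : PreCausalTeam V A) (X : Set V) (x : V → A) (s : V → A)
    (hwf : WellFounded T.edge) (W : V) :
    T.doAssign X x s W =
      if W ∈ X then x W
      else (T.fn W fun P =>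
        if _ : T.edge P W then T.doAssign X x s P else s P).getD (s W) := by
  conv_lhs => rw [doAssign, dif_pos hwf, WellFounded.fix_eq]
  simp only [doAssign, dif_pos hwf]

end PreCausalTeam

/-- For a (parametric, recursive) causal team `T` with finite acyclic
graph, sets of variables `X, Y` with values `x ∈ Ran(X)`, `y ∈ Ran(Y)` that agree on
the common variables, letting `Y' = Y \ X` (with `y' = y` restricted to `Y'`), one has
`(T_{X=x})_{Y=y} = (T_{X=x})_{Y'=y'}`. -/
theorem intervene_diff {V A : Type} [Fintype V]
    (T : PreCausalTeam V A)
    (hcau : T.IsCausal) (hpar : T.Parametric) (hrec : T.Recursive)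
    (X Y : Set V) (x y : V → A)
    (hx : ∀ v ∈ X, x v ∈ T.ran v) (hy : ∀ v ∈ Y, y v ∈ T.ran v)
    (hcompat : ∀ v, v ∈ X → v ∈ Y → x v = y v) :
    (T.doTeam X x).doTeam Y y = (T.doTeam X x).doTeam (Y \ X) y := by
  classical
  set S := T.doTeam X x with hS
  -- well-foundedness of the edge relations
  haveI : IsTrans V (Relation.TransGen T.edge) := inferInstance
  haveI : IsIrrefl V (Relation.TransGen T.edge) := ⟨fun a h => hrec a h⟩
  have hwfT : WellFounded T.edge :=
    Subrelation.wf (fun h => Relation.TransGen.single h)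
      (Finite.wellFounded_of_trans_of_irrefl (Relation.TransGen T.edge))
  have hwfS : WellFounded S.edge :=
    Subrelation.wf (r := T.edge) (fun h => h.1) hwfT
  have hSfn : ∀ W ∈ X, ∀ s, S.fn W s = none := by
    intro W hW s
    simp [hS, PreCausalTeam.doTeam, hW]
  -- every assignment in S.team takes value x on X
  have hsX : ∀ s ∈ S.team, ∀ W ∈ X, s W = x W := by
    rintro s ⟨t, _, rfl⟩ W hW
    rw [T.doAssign_eq X x t hwfT W, if_pos hW]
  -- key pointwise equality
  have key : ∀ s, (∀ W ∈ X, s W = x W) → ∀ W,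
      S.doAssign Y y s W = S.doAssign (Y \ X) y s W := by
    intro s hs W
    induction W using hwfS.induction with
    | _ W ih =>
      rw [S.doAssign_eq Y y s hwfS W, S.doAssign_eq (Y \ X) y s hwfS W]
      by_cases hWX : W ∈ X
      · have hfn1 : ∀ f : V → A, S.fn W f = none := hSfn W hWX
        by_cases hWY : W ∈ Y
        · rw [if_pos hWY, if_neg (fun h => h.2 hWX), hfn1, Option.getD_none,
            hs W hWX, hcompat W hWX hWY]
        · rw [if_neg hWY, if_neg (fun h => h.2 hWX), hfn1, hfn1]
      · by_cases hWY : W ∈ Y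
        · rw [if_pos hWY, if_pos ⟨hWY, hWX⟩]
        · rw [if_neg hWY, if_neg (fun h => hWY h.1)]
          congr 1
          apply congrArg
          funext P
          by_cases hp : S.edge P W
          · rw [dif_pos hp, dif_pos hp, ih P hp]
          · rw [dif_neg hp, dif_neg hp]
  -- now compare the two resulting teams
  have hteam : S.doAssign Y y '' S.team = S.doAssign (Y \ X) y '' S.team := by
    apply Set.image_congr
    intro s hsmem
    funext W
    exact key s (hsX s hsmem) W
  show PreCausalTeam.mk _ _ _ _ _ = PreCausalTeam.mk _ _ _ _ _
  congr 1
  · ext W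
    have he : S.endo = T.endo \ X := rfl
    simp only [he, Set.mem_diff]
    tauto
  · funext a b
    simp only [hS, PreCausalTeam.doTeam, Set.mem_diff, eq_iff_iff]
    tauto
  · funext a b
    have hfn : S.fn a b = if a ∈ X then none else T.fn a b := rfl
    by_cases haX : a ∈ X <;> by_cases haY : a ∈ Y <;>
      simp [hfn, haX, haY, Set.mem_diff]
end

section
/- Generalized import-export: let T be a causal team with G(T) finite and acyclic, X and Y sets of variables in dom(T), x ∈ Ran(X) and y ∈ Ran(Y), such that whenever a variable belongs to both X and Y, the values assigned to it by x and by y coincide. Then T_{X=x ∧ Y=y} = (T_{X=x})_{Y=y}. -/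
open scoped Classical

namespace PreCausalTeam

variable {V A : Type}

lemma doAssign_spec (T : PreCausalTeam V A) (hwf : WellFounded T.edge)
    (X : Set V) (x s : V → A) (W : V) :
    T.doAssign X x s W =
      if W ∈ X then x W
      else (T.fn W fun P => if T.edge P W then T.doAssign X x s P else s P).getD (s W) := by
  have hfix : T.doAssign X x s = WellFounded.fix (C := fun _ => A) hwf (fun W ih =>
      if W ∈ X then x W
      else (T.fn W fun P => if hp : T.edge P W then ih P hp else s P).getD (s W)) := by
    simp only [doAssign, dif_pos hwf]
  rw [hfix, WellFounded.fix_eq]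
  by_cases hW : W ∈ X
  · simp [hW]
  · simp only [if_neg hW]
    congr 1

lemma doAssign_mem_ran (T : PreCausalTeam V A) (hwf : WellFounded T.edge)
    (hran : ∀ Y s a, T.fn Y s = some a → a ∈ T.ran Y)
    (X : Set V) (x s : V → A) (hx : ∀ v ∈ X, x v ∈ T.ran v)
    (hs : ∀ v, s v ∈ T.ran v) (W : V) : T.doAssign X x s W ∈ T.ran W := by
  rw [doAssign_spec T hwf]
  split_ifs with h
  · exact hx W h
  · cases hfn : T.fn W (fun P => if T.edge P W then T.doAssign X x s P else s P) with
    | none => simpa [hfn] using hs W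
    | some a =>
      simp only [hfn, Option.getD_some]
      exact hran _ _ _ hfn

end PreCausalTeam

/-- Generalized import-export: for a (parametric, recursive) causal
team `T` with finite acyclic graph, sets of variables `X, Y` with values `x ∈ Ran(X)`,
`y ∈ Ran(Y)` that agree on the common variables, one has
`T_{X=x ∧ Y=y} = (T_{X=x})_{Y=y}`, where `T_{X=x ∧ Y=y}` is the intervention on
`X ∪ Y` with the corresponding (compatible) values. -/
theorem import_export_general {V A : Type} [Fintype V]
    (T : PreCausalTeam V A)
    (hcau : T.IsCausal) (hpar : T.Parametric) (hrec : T.Recursive)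
    (X Y : Set V) (x y : V → A)
    (hx : ∀ v ∈ X, x v ∈ T.ran v) (hy : ∀ v ∈ Y, y v ∈ T.ran v)
    (hcompat : ∀ v, v ∈ X → v ∈ Y → x v = y v) :
    T.doTeam (X ∪ Y) (fun v => if v ∈ X then x v else y v) =
      (T.doTeam X x).doTeam Y y := by
  classical
  obtain ⟨hmem, hnone, hdep, hranf, _hb, _hc⟩ := hcau
  set z : V → A := fun v => if v ∈ X then x v else y v with hz_def
  set T1 := T.doTeam X x with hT1
  -- well-foundedness
  have hwf : WellFounded T.edge := by
    have hirr : IsIrrefl V (Relation.TransGen T.edge) := ⟨hrec⟩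
    have hwft : WellFounded (Relation.TransGen T.edge) :=
      Finite.wellFounded_of_trans_of_irrefl _
    exact Subrelation.wf (fun h => Relation.TransGen.single h) hwft
  have hwf1 : WellFounded T1.edge :=
    Subrelation.wf (fun h => h.1) hwf
  have hz : ∀ v ∈ X ∪ Y, z v ∈ T.ran v := by
    intro v hv
    simp only [hz_def]
    split_ifs with hvX
    · exact hx v hvX
    · rcases hv with hv | hv
      · exact absurd hv hvX
      · exact hy v hv
  -- pointwise key lemma
  have key : ∀ s : V → A, (∀ v, s v ∈ T.ran v) →
      ∀ W, T.doAssign (X ∪ Y) z s W = T1.doAssign Y y (T.doAssign X x s) W := by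
    intro s hs
    set f := T.doAssign (X ∪ Y) z s with hf
    set g := T.doAssign X x s with hg
    have hfr : ∀ W, f W ∈ T.ran W := fun W =>
      T.doAssign_mem_ran hwf hranf _ _ _ hz hs W
    intro W
    induction W using WellFounded.induction hwf with
    | _ W ih =>
    by_cases hWY : W ∈ Y
    · -- W ∈ Y
      rw [T1.doAssign_spec hwf1, if_pos hWY, hf, T.doAssign_spec hwf,
        if_pos (Set.mem_union_right X hWY)]
      simp only [hz_def]
      split_ifs with hWX
      · exact hcompat W hWX hWY
      · rfl
    · by_cases hWX : W ∈ X
      · -- W ∈ X \ Y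
        rw [T1.doAssign_spec hwf1, if_neg hWY]
        have hfn1 : T1.fn W (fun P => if T1.edge P W then T1.doAssign Y y g P else g P)
            = none := by
          simp only [hT1, PreCausalTeam.doTeam, if_pos hWX]
        rw [hfn1]
        simp only [Option.getD_none]
        rw [hf, T.doAssign_spec hwf, if_pos (Set.mem_union_left Y hWX),
          hg, T.doAssign_spec hwf, if_pos hWX]
        simp only [hz_def, if_pos hWX]
      · -- W ∉ X ∪ Y
        have hWXY : W ∉ X ∪ Y := by
          intro h; rcases h with h | h; exact hWX h; exact hWY h
        rw [T1.doAssign_spec hwf1, if_neg hWY, hf, T.doAssign_spec hwf, if_neg hWXY]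
        have hfn1 : T1.fn W (fun P => if T1.edge P W then T1.doAssign Y y g P else g P)
            = T.fn W (fun P => if T1.edge P W then T1.doAssign Y y g P else g P) := by
          simp only [hT1, PreCausalTeam.doTeam, if_neg hWX]
        rw [hfn1]
        have hfneq : T.fn W (fun P => if T.edge P W then f P else s P)
            = T.fn W (fun P => if T1.edge P W then T1.doAssign Y y g P else g P) := by
          apply hdep
          intro P hP
          have hP1 : T1.edge P W := ⟨hP, hWX⟩
          rw [if_pos hP, if_pos hP1]
          exact ih P hP
        rw [← hfneq]
        by_cases hWe : W ∈ T.endo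
        · -- endogenous: structural function is defined
          have hsome : (T.fn W (fun P => if T.edge P W then f P else s P)).isSome := by
            apply hpar W hWe
            intro P hP
            rw [if_pos hP]
            exact hfr P
          obtain ⟨a, ha⟩ := Option.isSome_iff_exists.mp hsome
          rw [ha]
          rfl
        · -- exogenous: function is none, and g W = s W
          rw [hnone W hWe]
          have hgW : g W = s W := by
            rw [hg, T.doAssign_spec hwf, if_neg hWX, hnone W hWe]
            rfl
          rw [hgW]
  -- assemble the structure equality
  have hteam : T.doAssign (X ∪ Y) z '' T.team =
      T1.doAssign Y y '' (T.doAssign X x '' T.team) := by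
    rw [Set.image_image]
    apply Set.image_congr
    intro s hs
    funext W
    exact key s (fun v => hmem s hs v) W
  rw [hT1] at hteam ⊢
  show PreCausalTeam.mk _ _ _ _ _ = PreCausalTeam.mk _ _ _ _ _
  simp only [PreCausalTeam.doTeam, PreCausalTeam.mk.injEq]
  refine ⟨hteam, Set.diff_diff.symm, ?_, trivial, ?_⟩
  · funext a b
    simp only [eq_iff_iff, Set.mem_union]
    tauto
  · funext W s
    by_cases hX : W ∈ X <;> by_cases hY : W ∈ Y <;>
      simp [Set.mem_union, hX, hY]
end

section
/- Soundness of connective extraction rules: for every parametric recursive causal team T, variables X ⊆ dom(T), x ∈ Ran(X), and formulas ψ, ψ' of CO^neg: (OR) T ⊨ X=x □→ (ψ ∨ ψ') if and only if T ⊨ (X=x □→ ψ) ∨ (X=x □→ ψ'); (AND) T ⊨ X=x □→ (ψ ∧ ψ') if and only if T ⊨ (X=x □→ ψ) ∧ (X=x □→ ψ'); (NEG) T ⊨ X=x □→ ¬ψ if and only if T ⊨ ¬(X=x □→ ψ). -/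
open scoped Classical

/-- Classical formulas: Boolean combinations of atoms `Y = y` and `Y ≠ y`. -/
inductive ClForm (V A : Type) where
  | eq : V → A → ClForm V A
  | neq : V → A → ClForm V A
  | conj : ClForm V A → ClForm V A → ClForm V A
  | disj : ClForm V A → ClForm V A → ClForm V A

/-- Tarskian satisfaction of a classical formula by a single assignment. -/
def ClForm.sat {V A : Type} (s : V → A) : ClForm V A → Prop
  | .eq Y a => s Y = a
  | .neq Y a => s Y ≠ a
  | .conj φ ψ => ClForm.sat s φ ∧ ClForm.sat s ψ
  | .disj φ ψ => ClForm.sat s φ ∨ ClForm.sat s ψ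

/-- Formulas of the language `CO^neg`: atoms `Y = y`, `Y ≠ y`, conjunction, (tensor)
disjunction, dual negation, selective implication with classical antecedent, and
interventionist counterfactual. -/
inductive CONegForm (V A : Type) where
  | eq : V → A → CONegForm V A
  | neq : V → A → CONegForm V A
  | conj : CONegForm V A → CONegForm V A → CONegForm V A
  | disj : CONegForm V A → CONegForm V A → CONegForm V A
  | neg : CONegForm V A → CONegForm V A
  | selimp : ClForm V A → CONegForm V A → CONegForm V A
  | cf : Set V → (V → A) → CONegForm V A → CONegForm V A

/-- Team satisfaction for `CO^neg` formulas over causal teams. -/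
def CONegForm.sat {V A : Type} : CONegForm V A → PreCausalTeam V A → Prop
  | .eq Y a, T => ∀ s ∈ T.team, s Y = a
  | .neq Y a, T => ∀ s ∈ T.team, s Y ≠ a
  | .conj φ ψ, T => CONegForm.sat φ T ∧ CONegForm.sat ψ T
  | .disj φ ψ, T => ∃ S₁ S₂ : Set (V → A), S₁ ∪ S₂ = T.team ∧
      CONegForm.sat φ (T.withTeam S₁) ∧ CONegForm.sat ψ (T.withTeam S₂)
  | .neg φ, T => ∀ s ∈ T.team, ¬ CONegForm.sat φ (T.withTeam {s})
  | .selimp θ χ, T => CONegForm.sat χ (T.withTeam {s | s ∈ T.team ∧ ClForm.sat s θ})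
  | .cf X x χ, T => CONegForm.sat χ (T.doTeam X x)

lemma doTeam_withTeam {V A : Type} (T : PreCausalTeam V A) (S : Set (V → A))
    (X : Set V) (x : V → A) :
    (T.withTeam S).doTeam X x = (T.doTeam X x).withTeam (T.doAssign X x '' S) := rfl

/-- Soundness of the connective extraction rules for `CO^neg` over
parametric recursive causal teams:
(OR)  `T ⊨ X=x □→ (ψ ∨ ψ')` iff `T ⊨ (X=x □→ ψ) ∨ (X=x □→ ψ')`;
(AND) `T ⊨ X=x □→ (ψ ∧ ψ')` iff `T ⊨ (X=x □→ ψ) ∧ (X=x □→ ψ')`;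
(NEG) `T ⊨ X=x □→ ¬ψ` iff `T ⊨ ¬(X=x □→ ψ)`. -/
theorem connective_extraction {V A : Type} [Fintype V]
    (T : PreCausalTeam V A)
    (hcau : T.IsCausal) (hpar : T.Parametric) (hrec : T.Recursive)
    (X : Set V) (x : V → A) (hx : ∀ v ∈ X, x v ∈ T.ran v)
    (ψ ψ' : CONegForm V A) :
    (CONegForm.sat (CONegForm.cf X x (CONegForm.disj ψ ψ')) T ↔
      CONegForm.sat (CONegForm.disj (CONegForm.cf X x ψ) (CONegForm.cf X x ψ')) T) ∧
    (CONegForm.sat (CONegForm.cf X x (CONegForm.conj ψ ψ')) T ↔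
      CONegForm.sat (CONegForm.conj (CONegForm.cf X x ψ) (CONegForm.cf X x ψ')) T) ∧
    (CONegForm.sat (CONegForm.cf X x (CONegForm.neg ψ)) T ↔
      CONegForm.sat (CONegForm.neg (CONegForm.cf X x ψ)) T) := by
  set d := T.doAssign X x with hd
  refine ⟨?_, Iff.rfl, ?_⟩
  · constructor
    · rintro ⟨S₁, S₂, hU, h1, h2⟩
      refine ⟨{s ∈ T.team | d s ∈ S₁}, {s ∈ T.team | d s ∈ S₂}, ?_, ?_, ?_⟩
      · ext s
        simp only [Set.mem_union, Set.mem_setOf_eq]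
        constructor
        · rintro (⟨h, _⟩ | ⟨h, _⟩) <;> exact h
        · intro hs
          have : d s ∈ S₁ ∪ S₂ := by rw [hU]; exact ⟨s, hs, rfl⟩
          rcases this with h | h
          · exact Or.inl ⟨hs, h⟩
          · exact Or.inr ⟨hs, h⟩
      · show CONegForm.sat ψ ((T.withTeam _).doTeam X x)
        rw [doTeam_withTeam]
        have heq : d '' {s ∈ T.team | d s ∈ S₁} = S₁ := by
          ext t
          constructor
          · rintro ⟨s, ⟨_, h⟩, rfl⟩; exact h
          · intro ht
            have : t ∈ (T.doTeam X x).team := by rw [← hU]; exact Or.inl ht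
            rcases this with ⟨s, hs, rfl⟩
            exact ⟨s, ⟨hs, ht⟩, rfl⟩
        rw [← hd, heq]
        exact h1
      · show CONegForm.sat ψ' ((T.withTeam _).doTeam X x)
        rw [doTeam_withTeam]
        have heq : d '' {s ∈ T.team | d s ∈ S₂} = S₂ := by
          ext t
          constructor
          · rintro ⟨s, ⟨_, h⟩, rfl⟩; exact h
          · intro ht
            have : t ∈ (T.doTeam X x).team := by rw [← hU]; exact Or.inr ht
            rcases this with ⟨s, hs, rfl⟩
            exact ⟨s, ⟨hs, ht⟩, rfl⟩
        rw [← hd, heq]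
        exact h2
    · rintro ⟨U₁, U₂, hU, h1, h2⟩
      refine ⟨d '' U₁, d '' U₂, ?_, ?_, ?_⟩
      · rw [← Set.image_union, hU]; rfl
      · have := h1
        rw [show CONegForm.sat (CONegForm.cf X x ψ) (T.withTeam U₁) =
            CONegForm.sat ψ ((T.withTeam U₁).doTeam X x) from rfl,
          doTeam_withTeam] at this
        exact this
      · have := h2
        rw [show CONegForm.sat (CONegForm.cf X x ψ') (T.withTeam U₂) =
            CONegForm.sat ψ' ((T.withTeam U₂).doTeam X x) from rfl,
          doTeam_withTeam] at this
        exact this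
  · constructor
    · intro h s hs hsat
      have := h (d s) ⟨s, hs, rfl⟩
      apply this
      have h2 : CONegForm.sat ψ ((T.withTeam {s}).doTeam X x) := hsat
      rw [doTeam_withTeam, Set.image_singleton] at h2
      exact h2
    · intro h t ht hsat
      rcases ht with ⟨s, hs, rfl⟩
      apply h s hs
      show CONegForm.sat ψ ((T.withTeam {s}).doTeam X x)
      rw [doTeam_withTeam, Set.image_singleton]
      exact hsat
end

section
/- Complementary negation lemma: define, for CO formulas, the canonical complementary negation ψ^c by: (X=x)^c = X≠x; (X≠x)^c = X=x; (θ∧χ)^c = θ^c ∨ χ^c; (θ∨χ)^c = θ^c ∧ χ^c; (θ ⊃ χ)^c = θ ∧ χ^c; (X=x □→ χ)^c = X=x □→ χ^c. Then for every parametric recursive causal team T and every CO formula ψ, letting S = {s ∈ T⁻ : {s} ⊨ ψ}, one has T⁻ \ S = {s ∈ T⁻ : {s} ⊨ ψ^c}. -/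
open scoped Classical

/-- Formulas of the language `CO`: atoms `Y = y`, `Y ≠ y`, conjunction, (tensor)
disjunction, selective implication with classical antecedent, and interventionist
counterfactual. -/
inductive COForm (V A : Type) where
  | eq : V → A → COForm V A
  | neq : V → A → COForm V A
  | conj : COForm V A → COForm V A → COForm V A
  | disj : COForm V A → COForm V A → COForm V A
  | selimp : ClForm V A → COForm V A → COForm V A
  | cf : Set V → (V → A) → COForm V A → COForm V A

/-- Team satisfaction for `CO` formulas over causal teams. -/
def COForm.sat {V A : Type} : COForm V A → PreCausalTeam V A → Prop
  | .eq Y a, T => ∀ s ∈ T.team, s Y = a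
  | .neq Y a, T => ∀ s ∈ T.team, s Y ≠ a
  | .conj φ ψ, T => COForm.sat φ T ∧ COForm.sat ψ T
  | .disj φ ψ, T => ∃ S₁ S₂ : Set (V → A), S₁ ∪ S₂ = T.team ∧
      COForm.sat φ (T.withTeam S₁) ∧ COForm.sat ψ (T.withTeam S₂)
  | .selimp θ χ, T => COForm.sat χ (T.withTeam {s | s ∈ T.team ∧ ClForm.sat s θ})
  | .cf X x χ, T => COForm.sat χ (T.doTeam X x)

/-- Satisfaction of a `CO` formula by a single assignment of a causal team, i.e.
satisfaction by the singleton causal subteam `{s}` of `T`. -/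
def singleSat {V A : Type} (T : PreCausalTeam V A) (s : V → A) (ψ : COForm V A) : Prop :=
  COForm.sat ψ (T.withTeam {s})

/-- The embedding of classical formulas into `CO`. -/
def ClForm.toCO {V A : Type} : ClForm V A → COForm V A
  | .eq Y a => COForm.eq Y a
  | .neq Y a => COForm.neq Y a
  | .conj φ ψ => COForm.conj φ.toCO ψ.toCO
  | .disj φ ψ => COForm.disj φ.toCO ψ.toCO

/-- The canonical complementary negation `ψ^c` of a `CO` formula:
`(X=x)^c = X≠x`, `(X≠x)^c = X=x`, `(θ∧χ)^c = θ^c ∨ χ^c`, `(θ∨χ)^c = θ^c ∧ χ^c`,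
`(θ ⊃ χ)^c = θ ∧ χ^c`, `(X=x □→ χ)^c = X=x □→ χ^c`. -/
def COForm.compl {V A : Type} : COForm V A → COForm V A
  | .eq Y a => COForm.neq Y a
  | .neq Y a => COForm.eq Y a
  | .conj φ ψ => COForm.disj φ.compl ψ.compl
  | .disj φ ψ => COForm.conj φ.compl ψ.compl
  | .selimp θ χ => COForm.conj θ.toCO χ.compl
  | .cf X x χ => COForm.cf X x χ.compl

lemma sat_empty {V A : Type} (ψ : COForm V A) :
    ∀ T : PreCausalTeam V A, T.team = ∅ → ψ.sat T := by
  induction ψ with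
  | eq Y a => intro T h; simp [COForm.sat, h]
  | neq Y a => intro T h; simp [COForm.sat, h]
  | conj φ χ ihφ ihχ =>
      intro T h; exact ⟨ihφ T h, ihχ T h⟩
  | disj φ χ ihφ ihχ =>
      intro T h
      exact ⟨∅, ∅, by simp [h], ihφ _ rfl, ihχ _ rfl⟩
  | selimp θ χ ih =>
      intro T h
      apply ih
      simp [PreCausalTeam.withTeam, h]
  | cf X x χ ih =>
      intro T h
      apply ih
      simp [PreCausalTeam.doTeam, h]

lemma sat_disj_singleton {V A : Type} (φ χ : COForm V A) (T : PreCausalTeam V A)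
    (s : V → A) :
    (COForm.disj φ χ).sat (T.withTeam {s}) ↔
      φ.sat (T.withTeam {s}) ∨ χ.sat (T.withTeam {s}) := by
  constructor
  · rintro ⟨S₁, S₂, hU, h1, h2⟩
    have hs : s ∈ S₁ ∪ S₂ := by
      rw [hU]; rfl
    rcases hs with hs | hs
    · left
      have : S₁ = {s} := by
        apply Set.eq_singleton_iff_unique_mem.2
        refine ⟨hs, fun t ht => ?_⟩
        have : t ∈ S₁ ∪ S₂ := Or.inl ht
        rw [hU] at this
        exact this
      rwa [← this]
    · right
      have : S₂ = {s} := by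
        apply Set.eq_singleton_iff_unique_mem.2
        refine ⟨hs, fun t ht => ?_⟩
        have : t ∈ S₁ ∪ S₂ := Or.inr ht
        rw [hU] at this
        exact this
      rwa [← this]
  · rintro (h | h)
    · exact ⟨{s}, ∅, by simp [PreCausalTeam.withTeam], h, sat_empty _ _ rfl⟩
    · exact ⟨∅, {s}, by simp [PreCausalTeam.withTeam], sat_empty _ _ rfl, h⟩

lemma sat_toCO_singleton {V A : Type} (θ : ClForm V A) (T : PreCausalTeam V A)
    (s : V → A) :
    θ.toCO.sat (T.withTeam {s}) ↔ ClForm.sat s θ := by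
  induction θ with
  | eq Y a => simp [ClForm.toCO, COForm.sat, ClForm.sat, PreCausalTeam.withTeam]
  | neq Y a => simp [ClForm.toCO, COForm.sat, ClForm.sat, PreCausalTeam.withTeam]
  | conj φ χ ihφ ihχ =>
      show φ.toCO.sat _ ∧ χ.toCO.sat _ ↔ _
      rw [ihφ, ihχ]; rfl
  | disj φ χ ihφ ihχ =>
      show (COForm.disj φ.toCO χ.toCO).sat _ ↔ _
      rw [sat_disj_singleton, ihφ, ihχ]; rfl

lemma withTeam_team {V A : Type} (T : PreCausalTeam V A) : T.withTeam T.team = T := rfl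

lemma compl_sat {V A : Type} (ψ : COForm V A) :
    ∀ (T : PreCausalTeam V A) (s : V → A),
      singleSat T s (COForm.compl ψ) ↔ ¬ singleSat T s ψ := by
  induction ψ with
  | eq Y a =>
      intro T s
      simp [singleSat, COForm.compl, COForm.sat, PreCausalTeam.withTeam]
  | neq Y a =>
      intro T s
      simp [singleSat, COForm.compl, COForm.sat, PreCausalTeam.withTeam]
  | conj φ χ ihφ ihχ =>
      intro T s
      show (COForm.disj φ.compl χ.compl).sat (T.withTeam {s}) ↔ _
      rw [sat_disj_singleton]
      have h1 := ihφ T s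
      have h2 := ihχ T s
      simp only [singleSat] at h1 h2 ⊢
      rw [h1, h2]
      show _ ↔ ¬ (φ.sat _ ∧ χ.sat _)
      tauto
  | disj φ χ ihφ ihχ =>
      intro T s
      show φ.compl.sat (T.withTeam {s}) ∧ χ.compl.sat (T.withTeam {s}) ↔
        ¬ (COForm.disj φ χ).sat (T.withTeam {s})
      rw [sat_disj_singleton]
      have h1 := ihφ T s
      have h2 := ihχ T s
      simp only [singleSat] at h1 h2
      rw [h1, h2]
      tauto
  | selimp θ χ ih =>
      intro T s
      show θ.toCO.sat (T.withTeam {s}) ∧ χ.compl.sat (T.withTeam {s}) ↔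
        ¬ χ.sat ((T.withTeam {s}).withTeam {t | t ∈ ({s} : Set (V → A)) ∧ ClForm.sat t θ})
      rw [sat_toCO_singleton]
      by_cases hθ : ClForm.sat s θ
      · have hset : {t | t ∈ ({s} : Set (V → A)) ∧ ClForm.sat t θ} = {s} := by
          ext t
          simp only [Set.mem_setOf_eq, Set.mem_singleton_iff]
          constructor
          · rintro ⟨h, _⟩; exact h
          · rintro rfl; exact ⟨rfl, hθ⟩
        rw [hset]
        have h2 := ih T s
        simp only [singleSat] at h2
        have : (T.withTeam {s}).withTeam {s} = T.withTeam {s} := rfl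
        rw [this, h2]
        tauto
      · have hset : {t | t ∈ ({s} : Set (V → A)) ∧ ClForm.sat t θ} = ∅ := by
          ext t
          simp only [Set.mem_setOf_eq, Set.mem_singleton_iff, Set.mem_empty_iff_false,
            iff_false, not_and]
          rintro rfl; exact hθ
        rw [hset]
        have : χ.sat ((T.withTeam {s}).withTeam ∅) := sat_empty _ _ rfl
        tauto
  | cf X x χ ih =>
      intro T s
      show χ.compl.sat ((T.withTeam {s}).doTeam X x) ↔
        ¬ χ.sat ((T.withTeam {s}).doTeam X x)
      set T' := (T.withTeam {s}).doTeam X x with hT'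
      set t := (T.withTeam {s}).doAssign X x s with ht
      have hteam : T'.team = {t} := by
        show (T.withTeam {s}).doAssign X x '' {s} = {t}
        simp [ht]
      have hrw : T'.withTeam {t} = T' := by
        rw [← hteam]; rfl
      have h2 := ih T' t
      simp only [singleSat, hrw] at h2
      exact h2

/-- Complementary negation lemma: for every parametric recursive
causal team `T` and every `CO` formula `ψ`, letting `S = {s ∈ T⁻ : {s} ⊨ ψ}`, one has
`T⁻ \ S = {s ∈ T⁻ : {s} ⊨ ψ^c}`. -/
theorem complementary_negation {V A : Type} [Fintype V]
    (T : PreCausalTeam V A)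
    (hcau : T.IsCausal) (hpar : T.Parametric) (hrec : T.Recursive)
    (ψ : COForm V A) :
    T.team \ {s ∈ T.team | singleSat T s ψ} =
      {s ∈ T.team | singleSat T s (COForm.compl ψ)} := by
  ext s
  simp only [Set.mem_diff, Set.mem_setOf_eq, Set.mem_sep_iff]
  rw [compl_sat]
  tauto
end
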